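/- arXiv:1311.1382 — 2 statements merged into one kernel-verified Lean document; each statement's English description precedes it below -/
import Mathlib

section
/- (Long–Zhang periodic version of Gordon's lemma.) Let k ≥ 1 be an integer, T > 0 and a > 0. Let x : ℝ → ℝᵏ be T-periodic, absolutely continuous with derivative ẋ square-integrable on [0,T], and suppose ∫₀^T x(t) dt = 0. Then ∫₀^T ( (1/2)|ẋ(t)|² + a/|x(t)| ) dt ≥ (3/2)·(2π)^{2/3}·a^{2/3}·T^{1/3}, where the integral is an extended-real Lebesgue integral (the term a/|x(t)| is +∞ where x(t) = 0). -/
/-!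
Three inequalities combine. By Wirtinger's inequality a mean-zero `T`-periodic curve satisfies
`B := ∫|x|² ≤ (T/2π)² ∫|ẋ|² =: (T/2π)² A`; coordinatewise this is Parseval's identity together
with `x̂ₙ = T/(2πin) · (ẋ)̂ₙ`, an integration by parts that holds for absolutely continuous `x`
by Fubini on the triangle `s ≤ t`. Hölder's inequality with exponents `3` and `3/2`, applied to
`|x|^{2/3} · |x|^{-2/3}`, gives `T³ ≤ B J²` with `J := ∫|x|⁻¹`; hence `4π²T ≤ A J²`. Finally
AM-GM for the three terms `A/2, aJ/2, aJ/2` gives `A/2 + aJ ≥ 3 (A a² J²/8)^{1/3}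
≥ (3/2)(2π)^{2/3} a^{2/3} T^{1/3}`.
-/

open MeasureTheory Real Set
open scoped ENNReal

theorem continuousOn_Icc_of_forall_eq_add_integral {E : Type*} [NormedAddCommGroup E]
    [NormedSpace ℝ E] {a b : ℝ} (hab : a ≤ b) {f f' : ℝ → E}
    (hf : ∀ t ∈ Icc a b, f t = f a + ∫ s in a..t, f' s) (hf' : IntegrableOn f' (Ioc a b)) :
    ContinuousOn f (Icc a b) := by
  have hF := intervalIntegral.continuousOn_primitive_interval (a := a) (b := b) (μ := volume)
    (f := f') (by rwa [uIcc_of_le hab, integrableOn_Icc_iff_integrableOn_Ioc])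
  rw [uIcc_of_le hab] at hF
  exact (continuousOn_const.add hF).congr hf

theorem memLp_restrict_Ioc_of_forall_eq_add_integral {E : Type*} [NormedAddCommGroup E]
    [NormedSpace ℝ E] {a b : ℝ} (hab : a ≤ b) {f f' : ℝ → E}
    (hf : ∀ t ∈ Icc a b, f t = f a + ∫ s in a..t, f' s) (hf' : IntegrableOn f' (Ioc a b))
    (p : ℝ≥0∞) : MemLp f p (volume.restrict (Ioc a b)) := by
  have hfc := continuousOn_Icc_of_forall_eq_add_integral hab hf hf'
  obtain ⟨C, hC⟩ := isCompact_Icc.exists_bound_of_continuousOn hfc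
  exact MemLp.of_bound ((hfc.mono Ioc_subset_Icc_self).aestronglyMeasurable measurableSet_Ioc) C
    ((ae_restrict_iff' measurableSet_Ioc).2 (ae_of_all _ fun t ht => hC t (Ioc_subset_Icc_self ht)))

theorem integral_primitive_mul_eq {a b : ℝ} (hab : a ≤ b) {g e : ℝ → ℂ}
    (hg : IntegrableOn g (Ioc a b)) (he : IntegrableOn e (Ioc a b)) :
    ∫ t in a..b, (∫ s in a..t, g s) * e t = ∫ s in a..b, g s * ∫ t in s..b, e t := by
  set μ := volume.restrict (Ioc a b)
  set S : Set (ℝ × ℝ) := {p | p.2 ≤ p.1}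
  have hF : Integrable (Function.uncurry fun t s => S.indicator (fun p => g p.2 * e p.1) (t, s))
      (μ.prod μ) :=
    ((he.mul_prod hg).indicator (measurableSet_le measurable_snd measurable_fst)).congr
      (ae_of_all _ fun p => by simp only [mul_comm]; rfl)
  have inner_t : ∀ t ∈ Ioc a b,
      ∫ s, S.indicator (fun p => g p.2 * e p.1) (t, s) ∂μ = (∫ s in a..t, g s) * e t := by
    intro t ht
    have hIoc : Ioc a t = Ioc a b ∩ Iic t := by rw [Ioc_inter_Iic, min_eq_right ht.2]
    rw [intervalIntegral.integral_of_le ht.1.le, ← integral_mul_const, hIoc,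
      ← setIntegral_indicator measurableSet_Iic]
    rfl
  have inner_s : ∀ s ∈ Ioc a b,
      ∫ t, S.indicator (fun p => g p.2 * e p.1) (t, s) ∂μ = g s * ∫ t in s..b, e t := by
    intro s hs
    have hIcc : Icc s b = Ioc a b ∩ Ici s :=
      ext fun t => ⟨fun ht => ⟨⟨hs.1.trans_le ht.1, ht.2⟩, ht.1⟩, fun ht => ⟨ht.2, ht.1.2⟩⟩
    rw [intervalIntegral.integral_of_le hs.2, ← integral_const_mul,
      ← integral_Icc_eq_integral_Ioc (x := s), hIcc, ← setIntegral_indicator measurableSet_Ici]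
    rfl
  rw [intervalIntegral.integral_of_le hab, intervalIntegral.integral_of_le hab,
    ← setIntegral_congr_fun measurableSet_Ioc inner_t,
    ← setIntegral_congr_fun measurableSet_Ioc inner_s]
  exact integral_integral_swap hF

theorem integral_mul_deriv_eq_deriv_mul_of_primitive {a b : ℝ} (hab : a ≤ b)
    {u u' v v' : ℝ → ℂ} (hu : ∀ t ∈ Icc a b, u t = u a + ∫ s in a..t, u' s)
    (hu' : IntegrableOn u' (Ioc a b)) (hv : ∀ t ∈ Icc a b, HasDerivAt v (v' t) t)
    (hv' : IntegrableOn v' (Ioc a b)) :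
    ∫ t in a..b, u t * v' t = u b * v b - u a * v a - ∫ t in a..b, u' t * v t := by
  have hu'i : IntervalIntegrable u' volume a b :=
    (intervalIntegrable_iff_integrableOn_Ioc_of_le hab).2 hu'
  have hv'i : IntervalIntegrable v' volume a b :=
    (intervalIntegrable_iff_integrableOn_Ioc_of_le hab).2 hv'
  have hvc : ContinuousOn v (uIcc a b) := fun t ht =>
    (hv t (by rwa [uIcc_of_le hab] at ht)).continuousAt.continuousWithinAt
  have hFc : ContinuousOn (fun t => ∫ s in a..t, u' s) (uIcc a b) :=
    intervalIntegral.continuousOn_primitive_interval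
      (by rwa [uIcc_of_le hab, integrableOn_Icc_iff_integrableOn_Ioc])
  have hv'_int : ∀ s ∈ uIcc a b, ∫ t in s..b, v' t = v b - v s := by
    intro s hs
    rw [uIcc_of_le hab] at hs
    refine intervalIntegral.integral_eq_sub_of_hasDerivAt (fun t ht => hv t ?_)
      (hv'i.mono_set ?_)
    · rw [uIcc_of_le hs.2] at ht; exact ⟨hs.1.trans ht.1, ht.2⟩
    · rw [uIcc_of_le hs.2, uIcc_of_le hab]; exact Icc_subset_Icc_left hs.1
  have hu_int : ∫ t in a..b, u' t = u b - u a := by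
    rw [hu b ⟨hab, le_rfl⟩]; ring
  calc ∫ t in a..b, u t * v' t
      = ∫ t in a..b, (u a * v' t + (∫ s in a..t, u' s) * v' t) := by
        refine intervalIntegral.integral_congr fun t ht => ?_
        rw [uIcc_of_le hab] at ht
        rw [hu t ht]; ring
    _ = u a * (v b - v a) + ∫ s in a..b, u' s * (v b - v s) := by
        rw [intervalIntegral.integral_add (hv'i.const_mul _) (hv'i.continuousOn_mul hFc),
          intervalIntegral.integral_const_mul, hv'_int a left_mem_uIcc,
          integral_primitive_mul_eq hab hu' hv']
        congr 1
        exact intervalIntegral.integral_congr fun s hs => by rw [hv'_int s hs]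
    _ = u b * v b - u a * v a - ∫ t in a..b, u' t * v t := by
        simp only [mul_sub]
        rw [intervalIntegral.integral_sub (hu'i.mul_const _) (hu'i.mul_continuousOn hvc),
          intervalIntegral.integral_mul_const, hu_int]
        ring

open Complex in
theorem fourierCoeffOn_of_forall_eq_add_integral {a b : ℝ} (hab : a < b) {f f' : ℝ → ℂ}
    {n : ℤ} (hn : n ≠ 0) (hf : ∀ t ∈ Icc a b, f t = f a + ∫ s in a..t, f' s)
    (hf' : IntegrableOn f' (Ioc a b)) :
    fourierCoeffOn hab f n = 1 / (-2 * π * I * n) *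
      (fourier (-n) (a : AddCircle (b - a)) * (f b - f a) - (b - a) * fourierCoeffOn hab f' n) := by
  have hT : Fact (0 < b - a) := ⟨sub_pos.2 hab⟩
  have he : Continuous fun t : ℝ => fourier (-n) (t : AddCircle (b - a)) :=
    (map_continuous _).comp (AddCircle.continuous_mk' _)
  have heb : fourier (-n) (b : AddCircle (b - a)) = fourier (-n) (a : AddCircle (b - a)) := by
    congr 1; simpa using AddCircle.coe_add_period (b - a) a
  have hibp := integral_mul_deriv_eq_deriv_mul_of_primitive hab.le hf hf'
    (fun t _ => has_antideriv_at_fourier_neg hT hn t) he.integrableOn_Ioc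
  simp only [heb, mul_left_comm (f' _), intervalIntegral.integral_const_mul] at hibp
  simp only [fourierCoeffOn_eq_integral, Complex.real_smul, smul_eq_mul, mul_comm (fourier (-n) _)]
  rw [hibp]
  have : (b - a : ℂ) ≠ 0 := sub_ne_zero.2 (by exact_mod_cast hab.ne')
  have : (n : ℂ) ≠ 0 := by exact_mod_cast hn
  have : (π : ℂ) ≠ 0 := by exact_mod_cast pi_ne_zero
  push_cast
  field_simp
  ring

theorem norm_fourierCoeffOn_le_of_forall_eq_add_integral {a b : ℝ} (hab : a < b) {f f' : ℝ → ℂ}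
    (hf : ∀ t ∈ Icc a b, f t = f a + ∫ s in a..t, f' s) (hfb : f b = f a)
    (hf' : IntegrableOn f' (Ioc a b)) {n : ℤ} (hn : n ≠ 0) :
    ‖fourierCoeffOn hab f n‖ ≤ (b - a) / (2 * π) * ‖fourierCoeffOn hab f' n‖ := by
  have hn1 : (1 : ℝ) ≤ |(n : ℝ)| := by exact_mod_cast Int.one_le_abs hn
  have hba : 0 < b - a := sub_pos.2 hab
  rw [fourierCoeffOn_of_forall_eq_add_integral hab hn hf hf', hfb, sub_self, mul_zero, zero_sub,
    ← Complex.ofReal_sub]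
  simp only [norm_mul, norm_neg, norm_div, norm_one, Complex.norm_real, Complex.norm_I,
    Complex.norm_intCast, Complex.norm_ofNat, Real.norm_eq_abs, abs_of_pos pi_pos,
    abs_of_pos hba]
  calc _ = (b - a) / (2 * π) * ‖fourierCoeffOn hab f' n‖ / |(n : ℝ)| := by field_simp
    _ ≤ _ := div_le_self (by positivity) hn1

theorem wirtinger_inequality {a b : ℝ} (hab : a < b) {f f' : ℝ → ℂ}
    (hf : ∀ t ∈ Icc a b, f t = f a + ∫ s in a..t, f' s) (hfb : f b = f a)
    (hf' : MemLp f' 2 (volume.restrict (Ioc a b))) (hmean : ∫ t in a..b, f t = 0) :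
    ∫ t in a..b, ‖f t‖ ^ 2 ≤ ((b - a) / (2 * π)) ^ 2 * ∫ t in a..b, ‖f' t‖ ^ 2 := by
  have hf'i : IntegrableOn f' (Ioc a b) := hf'.integrable one_le_two
  have hf2 := memLp_restrict_Ioc_of_forall_eq_add_integral hab.le hf hf'i 2
  have hcoeff : ∀ n, ‖fourierCoeffOn hab f n‖ ^ 2
      ≤ ((b - a) / (2 * π)) ^ 2 * ‖fourierCoeffOn hab f' n‖ ^ 2 := by
    intro n
    rcases eq_or_ne n 0 with rfl | hn
    · have h0 : fourierCoeffOn hab f 0 = 0 := by simp [fourierCoeffOn_eq_integral, hmean]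
      rw [h0, norm_zero, zero_pow two_ne_zero]
      positivity
    · rw [← mul_pow]
      exact pow_le_pow_left₀ (norm_nonneg _)
        (norm_fourierCoeffOn_le_of_forall_eq_add_integral hab hf hfb hf'i hn) 2
  have h := hasSum_le hcoeff (hasSum_sq_fourierCoeffOn hab hf2)
    ((hasSum_sq_fourierCoeffOn hab hf').mul_left _)
  rw [smul_eq_mul, smul_eq_mul, mul_left_comm] at h
  exact le_of_mul_le_mul_left h (inv_pos.2 (sub_pos.2 hab))

theorem EuclideanSpace.integral_norm_sq_eq_sum {α ι : Type*} [MeasurableSpace α] [Fintype ι]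
    {μ : Measure α} {x : α → EuclideanSpace ℝ ι} (hx : MemLp x 2 μ) :
    ∫ t, ‖x t‖ ^ 2 ∂μ = ∑ i, ∫ t, ‖x t i‖ ^ 2 ∂μ := by
  simp_rw [EuclideanSpace.norm_sq_eq]
  exact integral_finsetSum _ fun i _ =>
    ((EuclideanSpace.proj i : EuclideanSpace ℝ ι →L[ℝ] ℝ).comp_memLp' hx).integrable_norm_pow
      two_ne_zero

theorem EuclideanSpace.wirtinger_inequality {ι : Type*} [Fintype ι] {a b : ℝ} (hab : a < b)
    {x x' : ℝ → EuclideanSpace ℝ ι} (hx : ∀ t ∈ Icc a b, x t = x a + ∫ s in a..t, x' s)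
    (hxb : x b = x a) (hx' : MemLp x' 2 (volume.restrict (Ioc a b)))
    (hmean : ∫ t in a..b, x t = 0) :
    ∫ t in a..b, ‖x t‖ ^ 2 ≤ ((b - a) / (2 * π)) ^ 2 * ∫ t in a..b, ‖x' t‖ ^ 2 := by
  have hx'i : IntegrableOn x' (Ioc a b) := hx'.integrable one_le_two
  have hx2 := memLp_restrict_Ioc_of_forall_eq_add_integral hab.le hx hx'i 2
  have hcoord : ∀ i,
      ∫ t in a..b, ‖x t i‖ ^ 2 ≤ ((b - a) / (2 * π)) ^ 2 * ∫ t in a..b, ‖x' t i‖ ^ 2 := by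
    intro i
    set L : EuclideanSpace ℝ ι →L[ℝ] ℂ := Complex.ofRealCLM.comp (EuclideanSpace.proj i)
    have hL : ∀ v, ‖L v‖ = ‖v i‖ := fun v => by simp [L]
    have h := _root_.wirtinger_inequality hab (f := fun t => L (x t)) (f' := fun t => L (x' t))
      (fun t ht => by
        rw [hx t ht, map_add, L.intervalIntegral_comp_comm]
        exact (intervalIntegrable_iff_integrableOn_Ioc_of_le ht.1).2
          (hx'i.mono_set (Ioc_subset_Ioc_right ht.2)))
      (by rw [hxb]) (L.comp_memLp' hx')
      (by
        rw [L.intervalIntegral_comp_comm ((intervalIntegrable_iff_integrableOn_Ioc_of_le hab.le).2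
          (hx2.integrable one_le_two)), hmean, map_zero])
    simpa only [hL] using h
  simp_rw [intervalIntegral.integral_of_le hab.le, EuclideanSpace.integral_norm_sq_eq_sum hx2,
    EuclideanSpace.integral_norm_sq_eq_sum hx', Finset.mul_sum,
    ← intervalIntegral.integral_of_le hab.le]
  exact Finset.sum_le_sum fun i _ => hcoord i

theorem measure_univ_pow_three_le_lintegral_sq_mul_lintegral_inv_sq {α : Type*}
    [MeasurableSpace α] (μ : Measure α) {f : α → ℝ≥0∞} (hf : AEMeasurable f μ)
    (h0 : ∀ᵐ t ∂μ, f t ≠ 0) (htop : ∀ᵐ t ∂μ, f t ≠ ∞) :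
    μ univ ^ 3 ≤ (∫⁻ t, f t ^ 2 ∂μ) * (∫⁻ t, (f t)⁻¹ ∂μ) ^ 2 := by
  have hpq : HolderConjugate (3 : ℝ) (3 / 2) :=
    Real.holderConjugate_iff.2 ⟨by norm_num, by norm_num⟩
  have H := ENNReal.lintegral_mul_le_Lp_mul_Lq μ hpq (hf.pow_const (2 / 3 : ℝ))
    (hf.pow_const (-2 / 3 : ℝ))
  have hone : ∀ᵐ t ∂μ, (fun t => f t ^ (2 / 3 : ℝ) * f t ^ (-2 / 3 : ℝ)) t = 1 := by
    filter_upwards [h0, htop] with t ht0 httop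
    rw [← ENNReal.rpow_add _ _ ht0 httop]
    norm_num
  have h1 : ∀ t, (f t ^ (2 / 3 : ℝ)) ^ (3 : ℝ) = f t ^ 2 := fun t => by
    rw [← ENNReal.rpow_mul, ← ENNReal.rpow_natCast]; norm_num
  have h2 : ∀ t, (f t ^ (-2 / 3 : ℝ)) ^ (3 / 2 : ℝ) = (f t)⁻¹ := fun t => by
    rw [← ENNReal.rpow_mul, ← ENNReal.rpow_neg_one]; norm_num
  simp only [Pi.mul_apply, lintegral_congr_ae hone, lintegral_one, h1, h2] at H
  calc μ univ ^ 3
      ≤ ((∫⁻ t, f t ^ 2 ∂μ) ^ (1 / 3 : ℝ) * (∫⁻ t, (f t)⁻¹ ∂μ) ^ (1 / (3 / 2) : ℝ)) ^ 3 :=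
        pow_le_pow_left₀ zero_le H 3
    _ = (∫⁻ t, f t ^ 2 ∂μ) * (∫⁻ t, (f t)⁻¹ ∂μ) ^ 2 := by
        rw [mul_pow, ← ENNReal.rpow_natCast, ← ENNReal.rpow_natCast, ← ENNReal.rpow_mul,
          ← ENNReal.rpow_mul, ← ENNReal.rpow_natCast _ 2]
        norm_num

theorem gordon_constant_le {T a A B J : ℝ} (hT : 0 ≤ T) (ha : 0 ≤ a) (hA : 0 ≤ A) (hJ : 0 ≤ J)
    (hB : T ^ 3 ≤ B * J ^ 2) (hW : B ≤ (T / (2 * π)) ^ 2 * A) :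
    3 / 2 * (2 * π) ^ (2 / 3 : ℝ) * a ^ (2 / 3 : ℝ) * T ^ (1 / 3 : ℝ) ≤ A / 2 + a * J := by
  have h : 4 * π ^ 2 * T ≤ A * J ^ 2 := by
    rcases hT.eq_or_lt with rfl | hT
    · rw [mul_zero]; positivity
    refine le_of_mul_le_mul_left ?_ (pow_pos hT 2)
    calc T ^ 2 * (4 * π ^ 2 * T) = 4 * π ^ 2 * T ^ 3 := by ring
      _ ≤ 4 * π ^ 2 * ((T / (2 * π)) ^ 2 * A * J ^ 2) := by gcongr; nlinarith [sq_nonneg J]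
      _ = T ^ 2 * (A * J ^ 2) := by field_simp; ring
  have hcube : (3 / 2 * (2 * π) ^ (2 / 3 : ℝ) * a ^ (2 / 3 : ℝ) * T ^ (1 / 3 : ℝ)) ^ 3
      = 27 / 8 * (2 * π) ^ 2 * a ^ 2 * T := by
    have e2 : (2 / 3 : ℝ) * (3 : ℕ) = (2 : ℕ) := by norm_num
    have e1 : (1 / 3 : ℝ) * (3 : ℕ) = 1 := by norm_num
    simp only [mul_pow, ← rpow_mul_natCast (by positivity : (0 : ℝ) ≤ 2 * π),
      ← rpow_mul_natCast ha, ← rpow_mul_natCast hT, e2, e1, rpow_natCast, rpow_one]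
    ring
  rw [← pow_le_pow_iff_left₀ (by positivity) (by positivity) three_ne_zero, hcube]
  -- AM-GM: `(p + 2q)³ - 27 p q² = (p - q)² (p + 8q)` with `p = A/2`, `q = aJ/2`.
  nlinarith [mul_nonneg (sq_nonneg (A / 2 - a * J / 2)) (by positivity : 0 ≤ A / 2 + 4 * (a * J)),
    mul_le_mul_of_nonneg_left h (sq_nonneg a)]

theorem ofReal_gordon_constant_le_lintegral {α E : Type*} [MeasurableSpace α]
    [NormedAddCommGroup E] {μ : Measure α} [IsFiniteMeasure μ] {x x' : α → E} {a : ℝ}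
    (ha : 0 < a) (hx : MemLp x 2 μ) (hx' : MemLp x' 2 μ)
    (hW : ∫ t, ‖x t‖ ^ 2 ∂μ ≤ (μ.real univ / (2 * π)) ^ 2 * ∫ t, ‖x' t‖ ^ 2 ∂μ) :
    ENNReal.ofReal (3 / 2 * (2 * π) ^ (2 / 3 : ℝ) * a ^ (2 / 3 : ℝ) * μ.real univ ^ (1 / 3 : ℝ))
      ≤ ∫⁻ t, ENNReal.ofReal (1 / 2 * ‖x' t‖ ^ 2) + ENNReal.ofReal a / ENNReal.ofReal ‖x t‖ ∂μ := by
  set A := ∫ t, ‖x' t‖ ^ 2 ∂μ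
  set B := ∫ t, ‖x t‖ ^ 2 ∂μ
  set J := ∫⁻ t, (ENNReal.ofReal ‖x t‖)⁻¹ ∂μ
  have hxm : AEMeasurable (fun t => ENNReal.ofReal ‖x t‖) μ :=
    hx.1.norm.aemeasurable.ennreal_ofReal
  have hA : 0 ≤ A := integral_nonneg fun t => by positivity
  have hsplit :
      ∫⁻ t, ENNReal.ofReal (1 / 2 * ‖x' t‖ ^ 2) + ENNReal.ofReal a / ENNReal.ofReal ‖x t‖ ∂μ
        = ENNReal.ofReal (1 / 2 * A) + ENNReal.ofReal a * J := by
    rw [lintegral_add_left' (hx'.1.norm.aemeasurable.pow_const 2 |>.const_mul _).ennreal_ofReal,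
      ← ofReal_integral_eq_lintegral_ofReal ((hx'.integrable_norm_pow two_ne_zero).const_mul _)
        (ae_of_all _ fun t => by positivity), integral_const_mul]
    simp_rw [div_eq_mul_inv (ENNReal.ofReal a), lintegral_const_mul' _ _ ENNReal.ofReal_ne_top]
    rfl
  rw [hsplit]
  rcases eq_or_ne J ∞ with hJ | hJ
  · simp [hJ, ha]
  have h0 : ∀ᵐ t ∂μ, ENNReal.ofReal ‖x t‖ ≠ 0 :=
    (ae_lt_top' hxm.inv hJ).mono fun t ht => ENNReal.inv_lt_top.1 ht |>.ne'
  have hH := measure_univ_pow_three_le_lintegral_sq_mul_lintegral_inv_sq μ hxm h0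
    (ae_of_all _ fun _ => ENNReal.ofReal_ne_top)
  have hB : ∫⁻ t, ENNReal.ofReal ‖x t‖ ^ 2 ∂μ = ENNReal.ofReal B := by
    rw [ofReal_integral_eq_lintegral_ofReal (hx.integrable_norm_pow two_ne_zero)
      (ae_of_all _ fun t => by positivity)]
    simp_rw [ENNReal.ofReal_pow (norm_nonneg _)]
  change _ ≤ _ * J ^ 2 at hH
  rw [hB, ← ENNReal.ofReal_toReal hJ, ← ENNReal.ofReal_toReal (measure_ne_top μ univ)] at hH
  rw [← ENNReal.ofReal_pow (by positivity), ← ENNReal.ofReal_pow ENNReal.toReal_nonneg,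
    ← ENNReal.ofReal_mul (integral_nonneg fun t => by positivity),
    ENNReal.ofReal_le_ofReal_iff (by positivity)] at hH
  rw [← ENNReal.ofReal_toReal hJ, ← ENNReal.ofReal_mul ha.le,
    ← ENNReal.ofReal_add (by positivity) (by positivity), one_div_mul_eq_div]
  exact ENNReal.ofReal_le_ofReal
    (gordon_constant_le measureReal_nonneg ha.le hA ENNReal.toReal_nonneg hH hW)

theorem stmt7_general (k : ℕ) (T : ℝ) (hT : 0 < T) (a : ℝ) (ha : 0 < a)
    (x x' : ℝ → EuclideanSpace ℝ (Fin k))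
    (hper : ∀ t : ℝ, x (t + T) = x t)
    (hAC : ∀ t ∈ Set.Icc (0:ℝ) T, x t = x 0 + ∫ s in (0:ℝ)..t, x' s)
    (hL1 : IntegrableOn x' (Set.Icc (0:ℝ) T))
    (hL2 : IntegrableOn (fun t => ‖x' t‖ ^ 2) (Set.Icc (0:ℝ) T))
    (hmean : ∫ t in (0:ℝ)..T, x t = 0) :
    ENNReal.ofReal ((3 / 2) * (2 * π) ^ ((2:ℝ)/3) * a ^ ((2:ℝ)/3) * T ^ ((1:ℝ)/3))
      ≤ ∫⁻ t in Set.Icc (0:ℝ) T,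
          ENNReal.ofReal ((1 / 2) * ‖x' t‖ ^ 2) + ENNReal.ofReal a / ENNReal.ofReal ‖x t‖ := by
  have hx' : MemLp x' 2 (volume.restrict (Ioc 0 T)) :=
    ((memLp_two_iff_integrable_sq_norm hL1.aestronglyMeasurable).2 hL2).mono_measure
      (Measure.restrict_mono Ioc_subset_Icc_self le_rfl)
  have hx : MemLp x 2 (volume.restrict (Ioc 0 T)) :=
    memLp_restrict_Ioc_of_forall_eq_add_integral hT.le hAC (hx'.integrable one_le_two) 2
  have hW := EuclideanSpace.wirtinger_inequality hT hAC (by simpa using hper 0) hx' hmean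
  have hμ : (volume.restrict (Ioc 0 T)).real univ = T := by simp [hT.le]
  rw [intervalIntegral.integral_of_le hT.le, intervalIntegral.integral_of_le hT.le,
    sub_zero] at hW
  rw [← setLIntegral_congr Ioc_ae_eq_Icc]
  simpa only [hμ] using ofReal_gordon_constant_le_lintegral ha hx hx' (by rwa [hμ])

/-- Long–Zhang periodic version of Gordon's lemma: if `x : ℝ → ℝᵏ` is `T`-periodic,
absolutely continuous with square-integrable derivative `x'`, and `∫₀ᵀ x = 0`, then
`∫₀ᵀ (1/2)|x'|² + a/|x| ≥ (3/2) (2π)^{2/3} a^{2/3} T^{1/3}`. -/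
theorem stmt7 (k : ℕ) (hk : 1 ≤ k) (T : ℝ) (hT : 0 < T) (a : ℝ) (ha : 0 < a)
    (x x' : ℝ → EuclideanSpace ℝ (Fin k))
    (hper : ∀ t : ℝ, x (t + T) = x t)
    (hAC : ∀ t ∈ Set.Icc (0:ℝ) T, x t = x 0 + ∫ s in (0:ℝ)..t, x' s)
    (hL1 : IntegrableOn x' (Set.Icc (0:ℝ) T))
    (hL2 : IntegrableOn (fun t => ‖x' t‖ ^ 2) (Set.Icc (0:ℝ) T))
    (hmean : ∫ t in (0:ℝ)..T, x t = 0) :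
    ENNReal.ofReal ((3 / 2) * (2 * π) ^ ((2:ℝ)/3) * a ^ ((2:ℝ)/3) * T ^ ((1:ℝ)/3))
      ≤ ∫⁻ t in Set.Icc (0:ℝ) T,
          ENNReal.ofReal ((1 / 2) * ‖x' t‖ ^ 2) + ENNReal.ofReal a / ENNReal.ofReal ‖x t‖ :=
  stmt7_general k T hT a ha x x' hper hAC hL1 hL2 hmean
end

section
/- (Gordon bound for a loop with m equally spaced zeros.) Let k ≥ 1 and m ≥ 1 be integers and a > 0. Let x : ℝ → ℝᵏ be 1-periodic, absolutely continuous with derivative ẋ square-integrable on [0,1], and suppose x(i/m) = 0 for every integer i with 0 ≤ i ≤ m−1. Then ∫₀¹ ( (1/2)|ẋ(t)|² + a/|x(t)| ) dt ≥ (3/2)·(2π)^{2/3}·a^{2/3}·m^{2/3}, where the integral is an extended-real Lebesgue integral (the term a/|x(t)| is +∞ where x(t) = 0). -/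
/-!
Cut `[0, 1]` at the zeros `i / m` into `m` arcs of length `T = 1 / m`. On an arc `[u, v]` put
`r = |x|` and `g = |ẋ|`, so that `r t ≤ ∫_u^t g` and `r t ≤ ∫_t^v g`. The arc bound
`∫ (g²/2 + a/r) ≥ (3/2) (2π)^(2/3) a^(2/3) T^(1/3)` comes from calibrating against the
collision-ejection Kepler orbit of period `T = 2πκ`: at time `t = κ (e - sin e)` it has radius
`ρ = bκ (1 - cos e)` and velocity `p = b sin e / (1 - cos e)`, where `a = b³κ`, so the force
`q = a/ρ²` is `-dp/dt`. AM-GM gives `2a/ρ ≤ a/r + q r` pointwise. As `p` vanishes at half-time,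
Tonelli turns `∫ q(t) ∫_u^t g` over the first half and `∫ q(t) ∫_t^v g` over the second half into
`∫ |p| g ≤ ∫ (g²/2 + p²/2)`. In the eccentric anomaly `e`, `∫ 2a/ρ = 4πb²κ` and `∫ p²/2 = πb²κ`,
leaving `3πb²κ`.
-/

open MeasureTheory Real Set
open scoped ENNReal

theorem Real.sin_sub_sin_lt_sub {u v : ℝ} (h : u < v) : sin v - sin u < v - u := by
  have hd : 0 < (v - u) / 2 := half_pos (sub_pos.2 h)
  have hsin : |sin ((v - u) / 2)| < (v - u) / 2 := by
    simpa [abs_of_pos hd] using abs_sin_lt_abs hd.ne'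
  calc sin v - sin u = 2 * sin ((v - u) / 2) * cos ((v + u) / 2) := sin_sub_sin v u
    _ ≤ 2 * |sin ((v - u) / 2)| := by
      rw [mul_assoc]
      refine mul_le_mul_of_nonneg_left ?_ two_pos.le
      calc _ ≤ |sin ((v - u) / 2) * cos ((v + u) / 2)| := le_abs_self _
        _ ≤ |sin ((v - u) / 2)| := by
          rw [abs_mul]
          exact mul_le_of_le_one_right (abs_nonneg _) (abs_cos_le_one _)
    _ < v - u := by linarith

theorem Real.one_sub_cos_pos_of_mem_Ioo {e : ℝ} (he : e ∈ Ioo 0 (2 * π)) : 0 < 1 - cos e := by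
  refine sub_pos.2 ((cos_le_one e).lt_of_ne fun h => he.1.ne' ?_)
  exact (cos_eq_one_iff_of_lt_of_lt (by linarith [he.1, pi_pos]) he.2).1 h

theorem ofReal_intervalIntegral_eq_lintegral_Ioo {f : ℝ → ℝ} {u v : ℝ} (huv : u ≤ v)
    (hf : ContinuousOn f (Icc u v)) (hf₀ : ∀ e ∈ Ioo u v, 0 ≤ f e) :
    ENNReal.ofReal (∫ e in u..v, f e) = ∫⁻ e in Ioo u v, ENNReal.ofReal (f e) := by
  rw [intervalIntegral.integral_of_le huv, integral_Ioc_eq_integral_Ioo]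
  exact ofReal_integral_eq_lintegral_ofReal (hf.integrableOn_Icc.mono_set Ioo_subset_Icc_self)
    ((ae_restrict_iff' measurableSet_Ioo).2 (Filter.Eventually.of_forall hf₀))

theorem ENNReal.mul_ofReal_le_sq_div_two_add (x : ℝ≥0∞) (y : ℝ) :
    x * ENNReal.ofReal y ≤ x ^ 2 / 2 + ENNReal.ofReal (y ^ 2 / 2) := by
  have h := ENNReal.young_inequality x (ENNReal.ofReal y) Real.HolderConjugate.two_two
  simp only [ENNReal.rpow_two, ENNReal.ofReal_ofNat] at h
  refine h.trans (add_le_add_right ?_ _)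
  rw [ENNReal.ofReal_div_of_pos two_pos, ENNReal.ofReal_ofNat]
  gcongr
  rcases le_total 0 y with hy | hy
  · rw [ENNReal.ofReal_pow hy]
  · simp [ENNReal.ofReal_of_nonpos hy]

theorem ENNReal.ofReal_two_mul_div_le_div_add_mul {a ρ : ℝ} (ha : 0 < a) (hρ : 0 ≤ ρ)
    (R : ℝ≥0∞) :
    ENNReal.ofReal (2 * a / ρ) ≤ ENNReal.ofReal a / R + ENNReal.ofReal (a / ρ ^ 2) * R := by
  rcases hρ.eq_or_lt with rfl | hρ
  · simp
  rcases eq_or_ne R 0 with rfl | hR₀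
  · rw [ENNReal.div_zero (ENNReal.ofReal_pos.2 ha).ne']
    exact le_top
  rcases eq_or_ne R ⊤ with rfl | hR
  · simp [ENNReal.mul_top, ha, hρ]
  have hr : 0 < R.toReal := ENNReal.toReal_pos hR₀ hR
  rw [← ENNReal.ofReal_toReal hR, ← ENNReal.ofReal_div_of_pos hr,
    ← ENNReal.ofReal_mul (by positivity), ← ENNReal.ofReal_add (by positivity) (by positivity)]
  refine ENNReal.ofReal_le_ofReal ?_
  have hsq : a / R.toReal + a / ρ ^ 2 * R.toReal - 2 * a / ρ
      = a * (ρ - R.toReal) ^ 2 / (R.toReal * ρ ^ 2) := by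
    field_simp
    ring
  nlinarith [show 0 ≤ a * (ρ - R.toReal) ^ 2 / (R.toReal * ρ ^ 2) by positivity]

theorem lintegral_mul_lintegral_Ioc_swap {μ : Measure ℝ} [SFinite μ] {f g : ℝ → ℝ≥0∞}
    {α β : ℝ} (hf : AEMeasurable f (μ.restrict (Ioc α β)))
    (hg : AEMeasurable g (μ.restrict (Ioc α β))) :
    ∫⁻ t in Ioc α β, f t * ∫⁻ s in Ioc α t, g s ∂μ ∂μ
      = ∫⁻ s in Ioc α β, g s * ∫⁻ t in Icc s β, f t ∂μ ∂μ := by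
  have hlower : ∀ t ∈ Ioc α β,
      ∫⁻ s in Ioc α t, g s ∂μ = ∫⁻ s in Ioc α β, (Iic t).indicator g s ∂μ := fun t ht => by
    rw [lintegral_indicator measurableSet_Iic, Measure.restrict_restrict measurableSet_Iic,
      Iic_inter_Ioc_of_le ht.2]
  have hupper : ∀ s ∈ Ioc α β,
      ∫⁻ t in Icc s β, f t ∂μ = ∫⁻ t in Ioc α β, (Ici s).indicator f t ∂μ := fun s hs => by
    rw [lintegral_indicator measurableSet_Ici, Measure.restrict_restrict measurableSet_Ici]
    congr 2
    ext t
    simp only [mem_inter_iff, mem_Ici, mem_Ioc, mem_Icc]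
    exact ⟨fun h => ⟨h.1, hs.1.trans_le h.1, h.2⟩, fun h => ⟨h.1, h.2.2⟩⟩
  have hswap : ∀ t s, f t * (Iic t).indicator g s = g s * (Ici s).indicator f t := fun t s => by
    by_cases hst : s ≤ t
    · simp [indicator_of_mem (mem_Iic.2 hst), indicator_of_mem (mem_Ici.2 hst), mul_comm]
    · simp [indicator_of_notMem (mt mem_Iic.1 hst), indicator_of_notMem (mt mem_Ici.1 hst)]
  have hprod : AEMeasurable (Function.uncurry fun t s => f t * (Iic t).indicator g s)
      ((μ.restrict (Ioc α β)).prod (μ.restrict (Ioc α β))) :=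
    hf.comp_fst.mul
      (hg.comp_snd.indicator (measurableSet_le measurable_snd measurable_fst))
  calc ∫⁻ t in Ioc α β, f t * ∫⁻ s in Ioc α t, g s ∂μ ∂μ
      = ∫⁻ t in Ioc α β, ∫⁻ s in Ioc α β, f t * (Iic t).indicator g s ∂μ ∂μ :=
        setLIntegral_congr_fun measurableSet_Ioc fun t ht => by
          rw [hlower t ht, lintegral_const_mul'' _ (hg.indicator measurableSet_Iic)]
    _ = ∫⁻ s in Ioc α β, ∫⁻ t in Ioc α β, f t * (Iic t).indicator g s ∂μ ∂μ :=
        lintegral_lintegral_swap hprod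
    _ = ∫⁻ s in Ioc α β, g s * ∫⁻ t in Icc s β, f t ∂μ ∂μ :=
        setLIntegral_congr_fun measurableSet_Ioc fun s hs => by
          simp_rw [hswap]
          rw [hupper s hs, lintegral_const_mul'' _ (hf.indicator measurableSet_Ici)]

theorem measurePreserving_add_right_restrict_Ioc (u v c : ℝ) :
    MeasurePreserving (· + c) (volume.restrict (Ioc u v))
      (volume.restrict (Ioc (u + c) (v + c))) := by
  simpa using (measurePreserving_add_right volume c).restrict_preimage_emb
    (measurableEmbedding_addRight c) (Ioc (u + c) (v + c))

theorem setLIntegral_Ioc_comp_add_right (F : ℝ → ℝ≥0∞) (u v c : ℝ) :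
    ∫⁻ t in Ioc u v, F (t + c) = ∫⁻ t in Ioc (u + c) (v + c), F t :=
  (measurePreserving_add_right_restrict_Ioc u v c).lintegral_comp_emb
    (measurableEmbedding_addRight c) F

noncomputable def keplerTime (κ e : ℝ) : ℝ := κ * (e - sin e)

theorem keplerTime_strictMono {κ : ℝ} (hκ : 0 < κ) : StrictMono (keplerTime κ) := fun u v h => by
  have := sin_sub_sin_lt_sub h
  unfold keplerTime
  nlinarith

theorem hasDerivAt_keplerTime (κ e : ℝ) : HasDerivAt (keplerTime κ) (κ * (1 - cos e)) e :=
  ((hasDerivAt_id e).sub (hasDerivAt_sin e)).const_mul κ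

theorem keplerTime_surjective {κ : ℝ} (hκ : 0 < κ) : Function.Surjective (keplerTime κ) := by
  refine Continuous.surjective (by unfold keplerTime; fun_prop) ?_ ?_
  · refine Filter.tendsto_atTop_mono (fun e => ?_) <|
      (Filter.tendsto_atTop_add_const_right _ (-1) Filter.tendsto_id).const_mul_atTop hκ
    simp only [keplerTime, id]
    nlinarith [sin_le_one e]
  · refine Filter.tendsto_atBot_mono (fun e => ?_) <|
      (Filter.tendsto_atBot_add_const_right _ 1 Filter.tendsto_id).const_mul_atBot hκ
    simp only [keplerTime, id]
    nlinarith [neg_one_le_sin e]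

theorem keplerTime_zero (κ : ℝ) : keplerTime κ 0 = 0 := by simp [keplerTime]

theorem keplerTime_pi (κ : ℝ) : keplerTime κ π = π * κ := by
  simp [keplerTime]
  ring

theorem keplerTime_two_pi (κ : ℝ) : keplerTime κ (2 * π) = 2 * π * κ := by
  simp [keplerTime]
  ring

noncomputable def keplerAnomaly {κ : ℝ} (hκ : 0 < κ) : ℝ ≃o ℝ :=
  (StrictMono.orderIsoOfSurjective _ (keplerTime_strictMono hκ) (keplerTime_surjective hκ)).symm

theorem keplerAnomaly_keplerTime {κ : ℝ} (hκ : 0 < κ) (e : ℝ) :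
    keplerAnomaly hκ (keplerTime κ e) = e :=
  (keplerAnomaly hκ).apply_symm_apply e

theorem keplerTime_keplerAnomaly {κ : ℝ} (hκ : 0 < κ) (t : ℝ) :
    keplerTime κ (keplerAnomaly hκ t) = t :=
  (keplerAnomaly hκ).symm_apply_apply t

theorem measurable_keplerAnomaly {κ : ℝ} (hκ : 0 < κ) : Measurable (keplerAnomaly hκ) :=
  (keplerAnomaly hκ).continuous.measurable

theorem keplerAnomaly_mem_Ioo {κ t : ℝ} (hκ : 0 < κ) (ht : t ∈ Ioo 0 (2 * π * κ)) :
    keplerAnomaly hκ t ∈ Ioo 0 (2 * π) := by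
  rw [← keplerTime_zero κ, ← keplerTime_two_pi κ] at ht
  have h := mem_image_of_mem (keplerAnomaly hκ) ht
  rwa [OrderIso.image_Ioo, keplerAnomaly_keplerTime, keplerAnomaly_keplerTime] at h

theorem keplerAnomaly_pi_mul {κ : ℝ} (hκ : 0 < κ) : keplerAnomaly hκ (π * κ) = π := by
  rw [← keplerTime_pi, keplerAnomaly_keplerTime]

theorem lintegral_comp_keplerAnomaly {κ : ℝ} (hκ : 0 < κ) (F : ℝ → ℝ≥0∞) (u v : ℝ) :
    ∫⁻ t in Ioo (keplerTime κ u) (keplerTime κ v), F (keplerAnomaly hκ t)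
      = ∫⁻ e in Ioo u v, ENNReal.ofReal (κ * (1 - cos e)) * F e := by
  have himage : keplerTime κ '' Ioo u v = Ioo (keplerTime κ u) (keplerTime κ v) :=
    (keplerAnomaly hκ).symm.image_Ioo u v
  rw [← himage, lintegral_image_eq_lintegral_abs_deriv_mul measurableSet_Ioo
    (fun e _ => (hasDerivAt_keplerTime κ e).hasDerivWithinAt)
    (keplerTime_strictMono hκ).injective.injOn]
  refine setLIntegral_congr_fun measurableSet_Ioo fun e _ => ?_
  rw [abs_of_nonneg (mul_nonneg hκ.le (sub_nonneg.2 (cos_le_one e))),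
    keplerAnomaly_keplerTime]

noncomputable def keplerRadius (κ b e : ℝ) : ℝ := b * κ * (1 - cos e)

noncomputable def keplerForce (κ b e : ℝ) : ℝ := b ^ 3 * κ / keplerRadius κ b e ^ 2

noncomputable def keplerVelocity (b e : ℝ) : ℝ := b * sin e / (1 - cos e)

theorem keplerVelocity_pi (b : ℝ) : keplerVelocity b π = 0 := by simp [keplerVelocity]

theorem measurable_keplerForce (κ b : ℝ) : Measurable (keplerForce κ b) := by
  unfold keplerForce keplerRadius
  fun_prop

theorem measurable_keplerVelocity (b : ℝ) : Measurable (keplerVelocity b) := by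
  unfold keplerVelocity
  fun_prop

theorem hasDerivAt_keplerVelocity (b : ℝ) {e : ℝ} (he : 1 - cos e ≠ 0) :
    HasDerivAt (keplerVelocity b) (-(b / (1 - cos e))) e := by
  refine (((hasDerivAt_sin e).const_mul b).div ((hasDerivAt_cos e).const_sub 1) he).congr_deriv ?_
  field_simp
  linear_combination (-b) * sin_sq_add_cos_sq e

theorem integral_div_one_sub_cos (b : ℝ) {u v : ℝ} (hu : 0 < u) (huv : u ≤ v) (hv : v < 2 * π) :
    ∫ e in u..v, b / (1 - cos e) = keplerVelocity b u - keplerVelocity b v := by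
  have hsub : uIcc u v ⊆ Ioo 0 (2 * π) := by
    rw [uIcc_of_le huv]
    exact fun e he => ⟨hu.trans_le he.1, he.2.trans_lt hv⟩
  rw [intervalIntegral.integral_eq_sub_of_hasDerivAt (f := -keplerVelocity b) (fun e he => by
    simpa using (hasDerivAt_keplerVelocity b (one_sub_cos_pos_of_mem_Ioo (hsub he)).ne').neg)]
  · simp only [Pi.neg_apply]
    ring
  · exact (continuousOn_const.div (by fun_prop) fun e he =>
      (one_sub_cos_pos_of_mem_Ioo (hsub he)).ne').intervalIntegrable

section Calibration

variable {κ b : ℝ} (hκ : 0 < κ)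
include hκ

theorem lintegral_two_mul_div_keplerRadius (hb : 0 < b) :
    ∫⁻ t in Ioc 0 (2 * π * κ),
        ENNReal.ofReal (2 * (b ^ 3 * κ) / keplerRadius κ b (keplerAnomaly hκ t))
      = ENNReal.ofReal (4 * π * (b ^ 2 * κ)) := by
  have h := lintegral_comp_keplerAnomaly hκ
    (fun e => ENNReal.ofReal (2 * (b ^ 3 * κ) / keplerRadius κ b e)) 0 (2 * π)
  rw [keplerTime_zero, keplerTime_two_pi] at h
  rw [← setLIntegral_congr Ioo_ae_eq_Ioc, h,
    setLIntegral_congr_fun measurableSet_Ioo (g := fun _ => ENNReal.ofReal (2 * b ^ 2 * κ)),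
    setLIntegral_const, volume_Ioo, ← ENNReal.ofReal_mul (by positivity)]
  · ring_nf
  · intro e he
    have hc := one_sub_cos_pos_of_mem_Ioo he
    dsimp only
    rw [← ENNReal.ofReal_mul (by positivity), keplerRadius]
    congr 1
    field_simp

theorem lintegral_keplerForce (hb : 0 < b) {s₁ s₂ : ℝ} (h₁ : 0 < s₁) (h₁₂ : s₁ ≤ s₂)
    (h₂ : s₂ < 2 * π * κ) :
    ∫⁻ t in Ioo s₁ s₂, ENNReal.ofReal (keplerForce κ b (keplerAnomaly hκ t))
      = ENNReal.ofReal (keplerVelocity b (keplerAnomaly hκ s₁)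
          - keplerVelocity b (keplerAnomaly hκ s₂)) := by
  set u := keplerAnomaly hκ s₁
  set v := keplerAnomaly hκ s₂
  have hu : u ∈ Ioo 0 (2 * π) := keplerAnomaly_mem_Ioo hκ ⟨h₁, h₁₂.trans_lt h₂⟩
  have hv : v ∈ Ioo 0 (2 * π) := keplerAnomaly_mem_Ioo hκ ⟨h₁.trans_le h₁₂, h₂⟩
  have huv : u ≤ v := (keplerAnomaly hκ).monotone h₁₂
  have hpos : ∀ e ∈ Icc u v, 0 < 1 - cos e := fun e he =>
    one_sub_cos_pos_of_mem_Ioo ⟨hu.1.trans_le he.1, he.2.trans_lt hv.2⟩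
  have h := lintegral_comp_keplerAnomaly hκ (fun e => ENNReal.ofReal (keplerForce κ b e)) u v
  rw [keplerTime_keplerAnomaly, keplerTime_keplerAnomaly] at h
  rw [h, ← integral_div_one_sub_cos b hu.1 huv hv.2, ofReal_intervalIntegral_eq_lintegral_Ioo
    (f := fun e => b / (1 - cos e)) huv
    (continuousOn_const.div (by fun_prop) fun e he => (hpos e he).ne')
    fun e he => div_nonneg hb.le (hpos e (Ioo_subset_Icc_self he)).le]
  refine setLIntegral_congr_fun measurableSet_Ioo fun e he => ?_
  have hc := hpos e (Ioo_subset_Icc_self he)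
  rw [← ENNReal.ofReal_mul (by positivity), keplerForce, keplerRadius]
  congr 1
  field_simp

theorem lintegral_keplerVelocity_sq :
    ∫⁻ t in Ioc 0 (2 * π * κ), ENNReal.ofReal (keplerVelocity b (keplerAnomaly hκ t) ^ 2 / 2)
      = ENNReal.ofReal (π * (b ^ 2 * κ)) := by
  have h := lintegral_comp_keplerAnomaly hκ
    (fun e => ENNReal.ofReal (keplerVelocity b e ^ 2 / 2)) 0 (2 * π)
  rw [keplerTime_zero, keplerTime_two_pi] at h
  have hint : ∫ e in (0)..(2 * π), b ^ 2 * κ * (1 + cos e) / 2 = π * (b ^ 2 * κ) := by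
    simp
    ring
  rw [← setLIntegral_congr Ioo_ae_eq_Ioc, h, ← hint, ofReal_intervalIntegral_eq_lintegral_Ioo
    (by positivity) (by fun_prop)
    fun e _ => div_nonneg (mul_nonneg (by positivity) (by linarith [neg_one_le_cos e])) two_pos.le]
  refine setLIntegral_congr_fun measurableSet_Ioo fun e he => ?_
  have hc := one_sub_cos_pos_of_mem_Ioo he
  rw [← ENNReal.ofReal_mul (by positivity), keplerVelocity]
  congr 1
  field_simp
  linear_combination b ^ 2 * sin_sq_add_cos_sq e

theorem lintegral_keplerForce_mul_le_firstHalf (hb : 0 < b) {G R : ℝ → ℝ≥0∞}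
    (hG : AEMeasurable G (volume.restrict (Ioc 0 (π * κ))))
    (hR : ∀ t ∈ Ioc 0 (π * κ), R t ≤ ∫⁻ s in Ioc 0 t, G s) :
    ∫⁻ t in Ioc 0 (π * κ), ENNReal.ofReal (keplerForce κ b (keplerAnomaly hκ t)) * R t
      ≤ ∫⁻ t in Ioc 0 (π * κ),
          (G t ^ 2 / 2 + ENNReal.ofReal (keplerVelocity b (keplerAnomaly hκ t) ^ 2 / 2)) := by
  have hforce := ((measurable_keplerForce κ b).comp (measurable_keplerAnomaly hκ)).ennreal_ofReal
  calc _ ≤ ∫⁻ t in Ioc 0 (π * κ), ENNReal.ofReal (keplerForce κ b (keplerAnomaly hκ t))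
            * ∫⁻ s in Ioc 0 t, G s :=
        setLIntegral_mono' measurableSet_Ioc fun t ht => by gcongr; exact hR t ht
    _ = ∫⁻ s in Ioc 0 (π * κ), G s * ∫⁻ t in Icc s (π * κ),
          ENNReal.ofReal (keplerForce κ b (keplerAnomaly hκ t)) :=
        lintegral_mul_lintegral_Ioc_swap hforce.aemeasurable hG
    _ = ∫⁻ s in Ioc 0 (π * κ), G s * ENNReal.ofReal (keplerVelocity b (keplerAnomaly hκ s)) :=
        setLIntegral_congr_fun measurableSet_Ioc fun s hs => by
          rw [← setLIntegral_congr Ioo_ae_eq_Icc, lintegral_keplerForce hκ hb hs.1 hs.2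
            (by nlinarith [pi_pos]), keplerAnomaly_pi_mul, keplerVelocity_pi, sub_zero]
    _ ≤ _ := setLIntegral_mono' measurableSet_Ioc fun s _ =>
        ENNReal.mul_ofReal_le_sq_div_two_add _ _

theorem lintegral_keplerForce_mul_le_secondHalf (hb : 0 < b) {G R : ℝ → ℝ≥0∞}
    (hG : AEMeasurable G (volume.restrict (Ioc (π * κ) (2 * π * κ))))
    (hR : ∀ t ∈ Ioc (π * κ) (2 * π * κ), R t ≤ ∫⁻ s in Ioc t (2 * π * κ), G s) :
    ∫⁻ t in Ioc (π * κ) (2 * π * κ), ENNReal.ofReal (keplerForce κ b (keplerAnomaly hκ t)) * R t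
      ≤ ∫⁻ t in Ioc (π * κ) (2 * π * κ),
          (G t ^ 2 / 2 + ENNReal.ofReal (keplerVelocity b (keplerAnomaly hκ t) ^ 2 / 2)) := by
  have hforce := ((measurable_keplerForce κ b).comp (measurable_keplerAnomaly hκ)).ennreal_ofReal
  calc _ ≤ ∫⁻ t in Ioc (π * κ) (2 * π * κ), ENNReal.ofReal (keplerForce κ b (keplerAnomaly hκ t))
            * ∫⁻ s in Icc t (2 * π * κ), G s :=
        setLIntegral_mono' measurableSet_Ioc fun t ht => by
          gcongr
          exact (hR t ht).trans (lintegral_mono_set Ioc_subset_Icc_self)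
    _ = ∫⁻ s in Ioc (π * κ) (2 * π * κ), G s * ∫⁻ t in Ioc (π * κ) s,
          ENNReal.ofReal (keplerForce κ b (keplerAnomaly hκ t)) :=
        (lintegral_mul_lintegral_Ioc_swap hG hforce.aemeasurable).symm
    _ = ∫⁻ s in Ioo (π * κ) (2 * π * κ),
          G s * ENNReal.ofReal (-keplerVelocity b (keplerAnomaly hκ s)) := by
        -- at `s = 2πκ` the inner integral is `∞` while `keplerVelocity b (2π)` is a junk `0`
        rw [← setLIntegral_congr Ioo_ae_eq_Ioc]
        refine setLIntegral_congr_fun measurableSet_Ioo fun s hs => ?_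
        rw [← setLIntegral_congr Ioo_ae_eq_Ioc, lintegral_keplerForce hκ hb (by positivity)
          hs.1.le hs.2, keplerAnomaly_pi_mul, keplerVelocity_pi, zero_sub]
    _ ≤ _ := by
        rw [← setLIntegral_congr Ioo_ae_eq_Ioc]
        exact setLIntegral_mono' measurableSet_Ioo fun s _ => by
          simpa only [neg_sq] using ENNReal.mul_ofReal_le_sq_div_two_add (G s) (-keplerVelocity b _)

theorem lintegral_keplerForce_mul_le (hb : 0 < b) {G R : ℝ → ℝ≥0∞}
    (hG : AEMeasurable G (volume.restrict (Ioc 0 (2 * π * κ))))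
    (h₀ : ∀ t ∈ Ioc 0 (2 * π * κ), R t ≤ ∫⁻ s in Ioc 0 t, G s)
    (h₁ : ∀ t ∈ Ioc 0 (2 * π * κ), R t ≤ ∫⁻ s in Ioc t (2 * π * κ), G s) :
    ∫⁻ t in Ioc 0 (2 * π * κ), ENNReal.ofReal (keplerForce κ b (keplerAnomaly hκ t)) * R t
      ≤ ∫⁻ t in Ioc 0 (2 * π * κ),
          (G t ^ 2 / 2 + ENNReal.ofReal (keplerVelocity b (keplerAnomaly hκ t) ^ 2 / 2)) := by
  have hmid₀ : 0 ≤ π * κ := by positivity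
  have hmid : π * κ ≤ 2 * π * κ := by nlinarith [pi_pos]
  rw [← Ioc_union_Ioc_eq_Ioc hmid₀ hmid, lintegral_union measurableSet_Ioc
    (Ioc_disjoint_Ioc_of_le le_rfl), lintegral_union measurableSet_Ioc
    (Ioc_disjoint_Ioc_of_le le_rfl)]
  exact add_le_add
    (lintegral_keplerForce_mul_le_firstHalf hκ hb
      (hG.mono_measure (Measure.restrict_mono (Ioc_subset_Ioc_right hmid) le_rfl))
      fun t ht => h₀ t ⟨ht.1, ht.2.trans hmid⟩)
    (lintegral_keplerForce_mul_le_secondHalf hκ hb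
      (hG.mono_measure (Measure.restrict_mono (Ioc_subset_Ioc_left hmid₀) le_rfl))
      fun t ht => h₁ t ⟨hmid₀.trans_lt ht.1, ht.2⟩)

theorem ofReal_le_lintegral_keplerArch (hb : 0 < b) {G R : ℝ → ℝ≥0∞}
    (hG : AEMeasurable G (volume.restrict (Ioc 0 (2 * π * κ))))
    (hR : AEMeasurable R (volume.restrict (Ioc 0 (2 * π * κ))))
    (h₀ : ∀ t ∈ Ioc 0 (2 * π * κ), R t ≤ ∫⁻ s in Ioc 0 t, G s)
    (h₁ : ∀ t ∈ Ioc 0 (2 * π * κ), R t ≤ ∫⁻ s in Ioc t (2 * π * κ), G s) :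
    ENNReal.ofReal (3 * π * (b ^ 2 * κ))
      ≤ ∫⁻ t in Ioc 0 (2 * π * κ), (G t ^ 2 / 2 + ENNReal.ofReal (b ^ 3 * κ) / R t) := by
  have hforce := ((measurable_keplerForce κ b).comp (measurable_keplerAnomaly hκ)).ennreal_ofReal
  have hqR : AEMeasurable (fun t => ENNReal.ofReal (keplerForce κ b (keplerAnomaly hκ t)) * R t)
      (volume.restrict (Ioc 0 (2 * π * κ))) :=
    hforce.aemeasurable.mul hR
  have hamgm : ENNReal.ofReal (4 * π * (b ^ 2 * κ))
      ≤ (∫⁻ t in Ioc 0 (2 * π * κ), ENNReal.ofReal (b ^ 3 * κ) / R t)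
        + ∫⁻ t in Ioc 0 (2 * π * κ),
            ENNReal.ofReal (keplerForce κ b (keplerAnomaly hκ t)) * R t := by
    rw [← lintegral_two_mul_div_keplerRadius hκ hb, ← lintegral_add_right' _ hqR]
    exact setLIntegral_mono' measurableSet_Ioc fun t _ =>
      ENNReal.ofReal_two_mul_div_le_div_add_mul (by positivity)
        (mul_nonneg (by positivity) (sub_nonneg.2 (cos_le_one _))) (R t)
  have hcalib := lintegral_keplerForce_mul_le hκ hb hG h₀ h₁
  have hvel : Measurable fun t => ENNReal.ofReal (keplerVelocity b (keplerAnomaly hκ t) ^ 2 / 2) :=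
    (((measurable_keplerVelocity b).comp (measurable_keplerAnomaly hκ)).pow_const 2).div_const 2
      |>.ennreal_ofReal
  rw [lintegral_add_right' _ hvel.aemeasurable, lintegral_keplerVelocity_sq hκ] at hcalib
  have hsum : ENNReal.ofReal (4 * π * (b ^ 2 * κ))
      ≤ (∫⁻ t in Ioc 0 (2 * π * κ), (G t ^ 2 / 2 + ENNReal.ofReal (b ^ 3 * κ) / R t))
        + ENNReal.ofReal (π * (b ^ 2 * κ)) :=
    calc _ ≤ _ := hamgm
      _ ≤ (∫⁻ t in Ioc 0 (2 * π * κ), ENNReal.ofReal (b ^ 3 * κ) / R t)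
          + ((∫⁻ t in Ioc 0 (2 * π * κ), G t ^ 2 / 2) + ENNReal.ofReal (π * (b ^ 2 * κ))) := by
        gcongr
      _ ≤ _ := by
        rw [add_left_comm, ← add_assoc]
        gcongr
        exact le_lintegral_add _ _
  rw [show 3 * π * (b ^ 2 * κ) = 4 * π * (b ^ 2 * κ) - π * (b ^ 2 * κ) by ring,
    ENNReal.ofReal_sub _ (by positivity)]
  exact tsub_le_iff_right.2 hsum

end Calibration

theorem exists_keplerArch_params {a T : ℝ} (ha : 0 < a) (hT : 0 < T) :
    ∃ κ b : ℝ, 0 < κ ∧ 0 < b ∧ 2 * π * κ = T ∧ b ^ 3 * κ = a ∧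
      3 * π * (b ^ 2 * κ)
        = 3 / 2 * (2 * π) ^ ((2 : ℝ) / 3) * a ^ ((2 : ℝ) / 3) * T ^ ((1 : ℝ) / 3) := by
  have hcube : ∀ {x : ℝ}, 0 ≤ x → ∀ p : ℝ, (x ^ p) ^ 3 = x ^ (p * 3) := fun hx p =>
    (rpow_mul_natCast hx p 3).symm
  have hκ : 0 < T / (2 * π) := by positivity
  have hb3 : ((a / (T / (2 * π))) ^ ((1 : ℝ) / 3)) ^ 3 = a / (T / (2 * π)) := by
    rw [hcube (by positivity)]
    norm_num
  refine ⟨T / (2 * π), (a / (T / (2 * π))) ^ ((1 : ℝ) / 3), hκ, by positivity, by field_simp,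
    by rw [hb3]; field_simp, ?_⟩
  refine (pow_left_inj₀ (by positivity) (by positivity) three_ne_zero).1 ?_
  calc (3 * π * (((a / (T / (2 * π))) ^ ((1 : ℝ) / 3)) ^ 2 * (T / (2 * π)))) ^ 3
      = 27 * π ^ 3 * (((a / (T / (2 * π))) ^ ((1 : ℝ) / 3)) ^ 3) ^ 2 * (T / (2 * π)) ^ 3 := by
        ring
    _ = 27 / 8 * ((2 * π) ^ ((2 : ℝ) / 3)) ^ 3 * (a ^ ((2 : ℝ) / 3)) ^ 3
          * (T ^ ((1 : ℝ) / 3)) ^ 3 := by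
        rw [hb3, hcube (by positivity), hcube ha.le, hcube hT.le]
        norm_num
        field_simp
        ring
    _ = _ := by ring

theorem ofReal_le_lintegral_arch {a u v : ℝ} (ha : 0 < a) (huv : u < v) {G R : ℝ → ℝ≥0∞}
    (hG : AEMeasurable G (volume.restrict (Ioc u v)))
    (hR : AEMeasurable R (volume.restrict (Ioc u v)))
    (h₀ : ∀ t ∈ Ioc u v, R t ≤ ∫⁻ s in Ioc u t, G s)
    (h₁ : ∀ t ∈ Ioc u v, R t ≤ ∫⁻ s in Ioc t v, G s) :
    ENNReal.ofReal (3 / 2 * (2 * π) ^ ((2 : ℝ) / 3) * a ^ ((2 : ℝ) / 3) * (v - u) ^ ((1 : ℝ) / 3))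
      ≤ ∫⁻ t in Ioc u v, (G t ^ 2 / 2 + ENNReal.ofReal a / R t) := by
  obtain ⟨κ, b, hκ, hb, hT, rfl, hC⟩ := exists_keplerArch_params ha (sub_pos.2 huv)
  obtain rfl : v = 2 * π * κ + u := by linarith
  have hmp := measurePreserving_add_right_restrict_Ioc 0 (2 * π * κ) u
  rw [zero_add] at hmp
  have hmem : ∀ t ∈ Ioc 0 (2 * π * κ), t + u ∈ Ioc u (2 * π * κ + u) := fun t ht =>
    ⟨by linarith [ht.1], by linarith [ht.2]⟩
  rw [← hC, ← hmp.lintegral_comp_emb (measurableEmbedding_addRight u)]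
  refine ofReal_le_lintegral_keplerArch hκ hb
    (hG.comp_quasiMeasurePreserving hmp.quasiMeasurePreserving)
    (hR.comp_quasiMeasurePreserving hmp.quasiMeasurePreserving) (fun t ht => ?_) (fun t ht => ?_)
  · rw [setLIntegral_Ioc_comp_add_right, zero_add]
    exact h₀ (t + u) (hmem t ht)
  · rw [setLIntegral_Ioc_comp_add_right]
    exact h₁ (t + u) (hmem t ht)

section Action

variable {E : Type*} [NormedAddCommGroup E] [NormedSpace ℝ E] {x x' : ℝ → E}

theorem eq_add_intervalIntegral_of_mem_Icc {a b u : ℝ} (hx' : IntegrableOn x' (Icc a b))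
    (hx : ∀ t ∈ Icc a b, x t = x a + ∫ s in a..t, x' s) (hu : u ∈ Icc a b) :
    ∀ t ∈ Icc a b, x t = x u + ∫ s in u..t, x' s := fun t ht => by
  have hint : ∀ s ∈ Icc a b, IntervalIntegrable x' volume a s := fun s hs =>
    (hx'.mono_set (uIcc_subset_Icc (left_mem_Icc.2 (hs.1.trans hs.2)) hs)).intervalIntegrable
  rw [hx t ht, hx u hu, add_assoc, intervalIntegral.integral_add_adjacent_intervals (hint u hu)
    ((hint u hu).symm.trans (hint t ht))]

theorem ofReal_le_lintegral_action {a u v : ℝ} (ha : 0 < a) (huv : u < v)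
    (hx' : IntegrableOn x' (Icc u v)) (hx : ∀ t ∈ Icc u v, x t = x u + ∫ s in u..t, x' s)
    (hu : x u = 0) (hv : x v = 0) :
    ENNReal.ofReal (3 / 2 * (2 * π) ^ ((2 : ℝ) / 3) * a ^ ((2 : ℝ) / 3) * (v - u) ^ ((1 : ℝ) / 3))
      ≤ ∫⁻ t in Ioc u v, (‖x' t‖ₑ ^ 2 / 2 + ENNReal.ofReal a / ‖x t‖ₑ) := by
  have hprim : ∀ t ∈ Icc u v, x t = ∫ s in u..t, x' s := by simpa [hu] using hx
  have hint : ∀ t ∈ Icc u v, IntervalIntegrable x' volume u t := fun t ht =>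
    (hx'.mono_set (uIcc_subset_Icc (left_mem_Icc.2 huv.le) ht)).intervalIntegrable
  have hcont : ContinuousOn x (Icc u v) := by
    have h := intervalIntegral.continuousOn_primitive_interval (a := u) (b := v)
      (by rwa [uIcc_of_le huv.le])
    rw [uIcc_of_le huv.le] at h
    exact h.congr hprim
  refine ofReal_le_lintegral_arch ha huv
    (hx'.aestronglyMeasurable.enorm.mono_measure (Measure.restrict_mono Ioc_subset_Icc_self le_rfl))
    ((continuous_enorm.comp_continuousOn (hcont.mono Ioc_subset_Icc_self)).aemeasurable
      measurableSet_Ioc)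
    (fun t ht => ?_) (fun t ht => ?_)
  · rw [hprim t (Ioc_subset_Icc_self ht), intervalIntegral.integral_of_le ht.1.le]
    exact enorm_integral_le_lintegral_enorm _
  · have hsplit := intervalIntegral.integral_interval_sub_left (hint v (right_mem_Icc.2 huv.le))
      (hint t (Ioc_subset_Icc_self ht))
    rw [← hprim v (right_mem_Icc.2 huv.le), ← hprim t (Ioc_subset_Icc_self ht), hv, zero_sub,
      intervalIntegral.integral_of_le ht.2] at hsplit
    rw [← enorm_neg, hsplit]
    exact enorm_integral_le_lintegral_enorm _

theorem ofReal_le_lintegral_Ioc_div {a : ℝ} (ha : 0 < a) (hx' : IntegrableOn x' (Icc 0 1))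
    (hx : ∀ t ∈ Icc (0 : ℝ) 1, x t = x 0 + ∫ s in (0 : ℝ)..t, x' s) {i m : ℕ} (him : i < m)
    (hu : x (i / m) = 0) (hv : x ((i + 1) / m) = 0) :
    ENNReal.ofReal (3 / 2 * (2 * π) ^ ((2 : ℝ) / 3) * a ^ ((2 : ℝ) / 3) * (1 / m) ^ ((1 : ℝ) / 3))
      ≤ ∫⁻ t in Ioc ((i : ℝ) / m) ((i + 1) / m), (‖x' t‖ₑ ^ 2 / 2 + ENNReal.ofReal a / ‖x t‖ₑ) := by
  have hm : (0 : ℝ) < m := by exact_mod_cast him.trans_le' (Nat.zero_le i)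
  have hsub : Icc ((i : ℝ) / m) ((i + 1) / m) ⊆ Icc 0 1 :=
    Icc_subset_Icc (by positivity) (by rw [div_le_one hm]; exact_mod_cast him)
  have h := ofReal_le_lintegral_action ha (div_lt_div_of_pos_right (lt_add_one (i : ℝ)) hm)
    (hx'.mono_set hsub) (fun t ht => eq_add_intervalIntegral_of_mem_Icc hx' hx
      (hsub (left_mem_Icc.2 (by gcongr; linarith))) t (hsub ht)) hu hv
  rwa [show ((i : ℝ) + 1) / m - i / m = 1 / m by ring] at h

end Action

theorem sum_lintegral_Ioc_div_le (F : ℝ → ℝ≥0∞) (m : ℕ) :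
    ∑ i ∈ Finset.range m, ∫⁻ t in Ioc ((i : ℝ) / m) ((i + 1) / m), F t
      ≤ ∫⁻ t in Icc 0 1, F t := by
  have hmono : Monotone fun i : ℕ => (i : ℝ) / m := fun i j h =>
    div_le_div_of_nonneg_right (by exact_mod_cast h) m.cast_nonneg
  rw [← lintegral_biUnion_finset (fun i _ j _ hij => by
    simpa using hmono.pairwise_disjoint_on_Ioc_succ hij) (fun _ _ => measurableSet_Ioc)]
  refine lintegral_mono_set (iUnion₂_subset fun i hi => ?_)
  have him : i < m := Finset.mem_range.1 hi
  have hm : (0 : ℝ) < m := by exact_mod_cast him.trans_le' (Nat.zero_le i)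
  refine Ioc_subset_Icc_self.trans (Icc_subset_Icc (by positivity) ?_)
  rw [div_le_one hm]
  exact_mod_cast him

theorem natCast_mul_one_div_rpow_one_div_three (m : ℕ) :
    (m : ℝ) * (1 / m) ^ ((1 : ℝ) / 3) = m ^ ((2 : ℝ) / 3) := by
  rcases m.eq_zero_or_pos with rfl | hm
  · simp
  have hm' : (0 : ℝ) < m := by exact_mod_cast hm
  rw [one_div, inv_rpow hm'.le, ← div_eq_mul_inv, div_eq_iff (by positivity), ← rpow_add hm']
  norm_num

theorem stmt13_general (k m : ℕ) (a : ℝ) (ha : 0 < a)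
    (x x' : ℝ → EuclideanSpace ℝ (Fin k))
    (hper : ∀ t : ℝ, x (t + 1) = x t)
    (hAC : ∀ t ∈ Set.Icc (0:ℝ) 1, x t = x 0 + ∫ s in (0:ℝ)..t, x' s)
    (hL1 : IntegrableOn x' (Set.Icc (0:ℝ) 1))
    (hzero : ∀ i : ℕ, i ≤ m - 1 → x ((i : ℝ) / m) = 0) :
    ENNReal.ofReal ((3 / 2) * (2 * π) ^ ((2:ℝ)/3) * a ^ ((2:ℝ)/3) * (m : ℝ) ^ ((2:ℝ)/3))
      ≤ ∫⁻ t in Set.Icc (0:ℝ) 1,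
          ENNReal.ofReal ((1 / 2) * ‖x' t‖ ^ 2) + ENNReal.ofReal a / ENNReal.ofReal ‖x t‖ := by
  have hx₀ : x 0 = 0 := by simpa using hzero 0 (Nat.zero_le _)
  have hz : ∀ i ≤ m, x ((i : ℝ) / m) = 0 := fun i hi => by
    rcases hi.lt_or_eq with hi | rfl
    · exact hzero i (by omega)
    rcases i.eq_zero_or_pos with rfl | hi
    · simpa using hx₀
    · rw [div_self (by positivity), ← zero_add 1, hper, hx₀]
  calc _ = ∑ i ∈ Finset.range m, ENNReal.ofReal
        (3 / 2 * (2 * π) ^ ((2 : ℝ) / 3) * a ^ ((2 : ℝ) / 3) * (1 / m) ^ ((1 : ℝ) / 3)) := by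
        rw [Finset.sum_const, Finset.card_range, nsmul_eq_mul, ← ENNReal.ofReal_natCast,
          ← ENNReal.ofReal_mul m.cast_nonneg, ← natCast_mul_one_div_rpow_one_div_three]
        ring_nf
    _ ≤ ∑ i ∈ Finset.range m, ∫⁻ t in Ioc ((i : ℝ) / m) ((i + 1) / m),
          (‖x' t‖ₑ ^ 2 / 2 + ENNReal.ofReal a / ‖x t‖ₑ) :=
        Finset.sum_le_sum fun i hi => ofReal_le_lintegral_Ioc_div ha hL1 hAC
          (Finset.mem_range.1 hi) (hz i (Finset.mem_range.1 hi).le)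
          (by exact_mod_cast hz (i + 1) (Finset.mem_range.1 hi))
    _ ≤ _ := sum_lintegral_Ioc_div_le _ m
    _ = _ := lintegral_congr fun t => by
        rw [ofReal_norm, ENNReal.ofReal_mul (by norm_num), ENNReal.ofReal_pow (norm_nonneg _),
          ofReal_norm, one_div, ENNReal.ofReal_inv_of_pos two_pos, ENNReal.ofReal_ofNat,
          div_eq_mul_inv, mul_comm (‖x' t‖ₑ ^ 2)]

/-- Gordon bound for a 1-periodic loop with `m` equally spaced zeros:
`∫₀¹ (1/2)|x'|² + a/|x| ≥ (3/2) (2π)^{2/3} a^{2/3} m^{2/3}`. -/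
theorem stmt13 (k m : ℕ) (hk : 1 ≤ k) (hm : 1 ≤ m) (a : ℝ) (ha : 0 < a)
    (x x' : ℝ → EuclideanSpace ℝ (Fin k))
    (hper : ∀ t : ℝ, x (t + 1) = x t)
    (hAC : ∀ t ∈ Set.Icc (0:ℝ) 1, x t = x 0 + ∫ s in (0:ℝ)..t, x' s)
    (hL1 : IntegrableOn x' (Set.Icc (0:ℝ) 1))
    (hL2 : IntegrableOn (fun t => ‖x' t‖ ^ 2) (Set.Icc (0:ℝ) 1))
    (hzero : ∀ i : ℕ, i ≤ m - 1 → x ((i : ℝ) / m) = 0) :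
    ENNReal.ofReal ((3 / 2) * (2 * π) ^ ((2:ℝ)/3) * a ^ ((2:ℝ)/3) * (m : ℝ) ^ ((2:ℝ)/3))
      ≤ ∫⁻ t in Set.Icc (0:ℝ) 1,
          ENNReal.ofReal ((1 / 2) * ‖x' t‖ ^ 2) + ENNReal.ofReal a / ENNReal.ofReal ‖x t‖ :=
  stmt13_general k m a ha x x' hper hAC hL1 hzero
end
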